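/- Let G be a simple graph with maximum degree at most 3, and let F(G) be the associated set of flows in the Clos network C_{3, 3n+m}. Then F(G) admits a routing with congestion at most 1 if and only if G admits a proper 3-edge-coloring, i.e., a function c : E(G) → {1,2,3} assigning distinct colors to any two edges sharing a vertex. -/
import Mathlib


open Finset

/-- Congestion of a routing `r` of a finite family of flows in the Clos network
`C_{N,R}`. -/
noncomputable def congestion {F : Type*} [Fintype F] {N R : ℕ}
    (inp out : F → Fin R) (dem : F → ℝ) (r : F → Fin N) : ℝ :=
  ⨆ p : Fin R × Fin N,
    max (∑ f ∈ Finset.univ.filter (fun f => inp f = p.1 ∧ r f = p.2), dem f)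
        (∑ f ∈ Finset.univ.filter (fun f => out f = p.1 ∧ r f = p.2), dem f)

/-- The flows `F(G)` of the reduction from a graph with `n` vertices and `m` edges:
`vert k i j` are the cross-gadget (vertex) flows of the `k`-th vertex block,
`edg e b` the two edge flows of the `e`-th edge block, and `inc e b` the two
incident flows of edge `e` (`b = false` for the endpoint `u e`, `b = true` for
`v e`). -/
inductive RFlow (n m : ℕ) where
  | vert (k : Fin n) (i : Fin 3) (j : Fin 2)
  | edg (e : Fin m) (b : Fin 2)
  | inc (e : Fin m) (b : Bool)
  deriving DecidableEq, Fintype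

/-- The endpoint of edge `e` selected by `b`. -/
def ept {n m : ℕ} (u v : Fin m → Fin n) (e : Fin m) (b : Bool) : Fin n :=
  if b then v e else u e

/-- Input switch (0-based) of each flow of `F(G)` in `C_{3, 3n+m}`. -/
def rInp {n m : ℕ} (u v : Fin m → Fin n) (rk : Fin m → Fin n → Fin 3) :
    RFlow n m → Fin (3 * n + m)
  | .vert k i _ => ⟨3 * k.1 + i.1, by have := k.2; have := i.2; omega⟩
  | .edg e _ => ⟨3 * n + e.1, by have := e.2; omega⟩
  | .inc e b =>
      ⟨3 * (ept u v e b).1 + (rk e (ept u v e b)).1,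
        by have := (ept u v e b).2; have := (rk e (ept u v e b)).2; omega⟩

/-- Output switch (0-based) of each flow of `F(G)`. -/
def rOut {n m : ℕ} : RFlow n m → Fin (3 * n + m)
  | .vert k _ j => ⟨3 * k.1 + j.1, by have := k.2; have := j.2; omega⟩
  | .edg e _ => ⟨3 * n + e.1, by have := e.2; omega⟩
  | .inc e _ => ⟨3 * n + e.1, by have := e.2; omega⟩

/-- Source index (0-based) of each flow of `F(G)`. -/
def rSrc {n m : ℕ} : RFlow n m → Fin 3
  | .vert _ _ j => ⟨j.1, by have := j.2; omega⟩
  | .edg _ b => ⟨b.1, by have := b.2; omega⟩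
  | .inc _ _ => 2

/-- Destination index (0-based) of each flow of `F(G)`. -/
def rDst {n m : ℕ} : RFlow n m → Fin 3
  | .vert _ i _ => i
  | .edg _ b => ⟨b.1, by have := b.2; omega⟩
  | .inc _ _ => 2

/-- Demands: `1` for vertex and edge flows, `1/2` for incident flows. -/
noncomputable def rDem {n m : ℕ} : RFlow n m → ℝ
  | .vert _ _ _ => 1
  | .edg _ _ => 1
  | .inc _ _ => 1 / 2

section ClosAux

def sh (x : Fin 2) : Fin 3 := ⟨x.1 + 1, by omega⟩

lemma sh_inj : ∀ (a : Fin 3) (x y : Fin 2), a + sh x = a + sh y → x = y := by decide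
lemma sh_ne : ∀ (a : Fin 3) (x : Fin 2), a + sh x ≠ a := by decide
lemma sh_cancel : ∀ (a b : Fin 3) (x : Fin 2), a + sh x = b + sh x → a = b := by decide
lemma fin3_forced : ∀ a b c d : Fin 3, a ≠ b → c ≠ a → c ≠ b → d ≠ a → d ≠ b → c = d := by decide
lemma fin3_third : ∀ i i' x y : Fin 3, i ≠ i' → x ≠ i → x ≠ i' → y ≠ i → y ≠ i' → x = y := by decide

lemma exists_inj_ext : ∀ (p : Fin 3 → Bool) (d : Fin 3 → Fin 3),
    (∀ i j, p i = true → p j = true → d i = d j → i = j) →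
    ∃ σ : Fin 3 → Fin 3, (∀ a b, σ a = σ b → a = b) ∧ ∀ i, p i = true → σ i = d i := by decide

variable {F : Type*} [Fintype F] [DecidableEq F] {N R : ℕ}

lemma load_inp_le (inp out : F → Fin R) (dem : F → ℝ) (r : F → Fin N) (s : Fin R) (μ : Fin N) :
    (∑ f ∈ Finset.univ.filter (fun f => inp f = s ∧ r f = μ), dem f) ≤ congestion inp out dem r := by
  unfold congestion
  refine le_trans ?_ (le_ciSup (Set.Finite.bddAbove (Set.finite_range _)) ((s, μ) : Fin R × Fin N))
  exact le_max_left _ _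

lemma load_out_le (inp out : F → Fin R) (dem : F → ℝ) (r : F → Fin N) (s : Fin R) (μ : Fin N) :
    (∑ f ∈ Finset.univ.filter (fun f => out f = s ∧ r f = μ), dem f) ≤ congestion inp out dem r := by
  unfold congestion
  refine le_trans ?_ (le_ciSup (Set.Finite.bddAbove (Set.finite_range _)) ((s, μ) : Fin R × Fin N))
  exact le_max_right _ _

lemma pair_le_load (dem : F → ℝ) (hdem : ∀ f, 0 ≤ dem f) {f g : F} (hfg : f ≠ g)
    {P : F → Prop} [DecidablePred P] (hf : P f) (hg : P g) :
    dem f + dem g ≤ ∑ x ∈ Finset.univ.filter P, dem x := by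
  have hsub : ({f, g} : Finset F) ⊆ Finset.univ.filter P := by
    intro x hx
    simp only [Finset.mem_insert, Finset.mem_singleton] at hx
    rcases hx with rfl | rfl <;> simp [hf, hg]
  calc dem f + dem g = ∑ x ∈ ({f, g} : Finset F), dem x := (Finset.sum_pair hfg).symm
    _ ≤ _ := Finset.sum_le_sum_of_subset_of_nonneg hsub (fun i _ _ => hdem i)

lemma conflict_inp {inp out : F → Fin R} {dem : F → ℝ} {r : F → Fin N}
    (h : congestion inp out dem r ≤ 1) (hdem : ∀ f, 0 ≤ dem f)
    {f g : F} (hfg : f ≠ g) (hio : inp f = inp g) (hr : r f = r g) :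
    dem f + dem g ≤ 1 :=
  le_trans (pair_le_load dem hdem hfg (P := fun x => inp x = inp f ∧ r x = r f)
      ⟨rfl, rfl⟩ ⟨hio.symm, hr.symm⟩) (le_trans (load_inp_le _ _ _ _ _ _) h)

lemma conflict_out {inp out : F → Fin R} {dem : F → ℝ} {r : F → Fin N}
    (h : congestion inp out dem r ≤ 1) (hdem : ∀ f, 0 ≤ dem f)
    {f g : F} (hfg : f ≠ g) (hio : out f = out g) (hr : r f = r g) :
    dem f + dem g ≤ 1 :=
  le_trans (pair_le_load dem hdem hfg (P := fun x => out x = out f ∧ r x = r f)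
      ⟨rfl, rfl⟩ ⟨hio.symm, hr.symm⟩) (le_trans (load_out_le _ _ _ _ _ _) h)

omit [Fintype F] [DecidableEq F] in
lemma sum_single_le (T : Finset F) (dem : F → ℝ) (h1 : ∀ f ∈ T, dem f ≤ 1)
    (h : ∀ f ∈ T, ∀ g ∈ T, f = g) : ∑ f ∈ T, dem f ≤ 1 := by
  rcases T.eq_empty_or_nonempty with rfl | ⟨a, ha⟩
  · simp
  · have hT : T = {a} := Finset.eq_singleton_iff_unique_mem.2 ⟨ha, fun x hx => h x hx a ha⟩
    rw [hT, Finset.sum_singleton]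
    exact h1 a ha

omit [Fintype F] in
lemma sum_pairing_le (T : Finset F) (dem : F → ℝ) (h1 : ∀ f ∈ T, dem f ≤ 1)
    (hp : ∀ f ∈ T, ∀ g ∈ T, f ≠ g → dem f + dem g ≤ 1 ∧ ∀ x ∈ T, x = f ∨ x = g) :
    ∑ f ∈ T, dem f ≤ 1 := by
  rcases T.eq_empty_or_nonempty with rfl | ⟨a, ha⟩
  · simp
  · by_cases huniq : ∀ x ∈ T, x = a
    · exact sum_single_le T dem h1 (fun f hf g hg => (huniq f hf).trans (huniq g hg).symm)
    · push_neg at huniq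
      obtain ⟨b, hb, hba⟩ := huniq
      obtain ⟨hsum, hcov⟩ := hp a ha b hb (Ne.symm hba)
      have hT : T = {a, b} := by
        apply Finset.Subset.antisymm
        · intro x hx
          rcases hcov x hx with rfl | rfl <;> simp
        · intro x hx
          simp only [Finset.mem_insert, Finset.mem_singleton] at hx
          rcases hx with rfl | rfl <;> assumption
      rw [hT, Finset.sum_pair (Ne.symm hba)]
      exact hsum

end ClosAux

section ClosRFlow

lemma ept_cases {n m : ℕ} (u v : Fin m → Fin n) (e : Fin m) (b : Bool) :
    u e = ept u v e b ∨ v e = ept u v e b := by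
  cases b
  · left; rfl
  · right; rfl

lemma rDem_nonneg {n m : ℕ} : ∀ f : RFlow n m, 0 ≤ rDem f := by
  intro f; cases f <;> norm_num [rDem]

lemma rDem_le_one {n m : ℕ} : ∀ f : RFlow n m, rDem f ≤ 1 := by
  intro f; cases f <;> norm_num [rDem]

/-- The routing used in the backward direction. -/
def routing {n m : ℕ} (σ : Fin n → Fin 3 → Fin 3) (c : Fin m → Fin 3) : RFlow n m → Fin 3
  | .vert k i j => σ k i + sh j
  | .edg e b => c e + sh b
  | .inc e _ => c e

end ClosRFlow

/-- `F(G)` admits a routing with congestion at most `1` if and only if `G` admits a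
proper 3-edge-coloring. -/
theorem reduction_correct {n m : ℕ}
    (u v : Fin m → Fin n) (hne : ∀ e, u e ≠ v e)
    (hsimple : ∀ e e' : Fin m,
      (u e = u e' ∧ v e = v e') ∨ (u e = v e' ∧ v e = u e') → e = e')
    (hdeg : ∀ w : Fin n,
      (Finset.univ.filter fun e : Fin m => u e = w ∨ v e = w).card ≤ 3)
    (rk : Fin m → Fin n → Fin 3)
    (hrk : ∀ (w : Fin n) (e e' : Fin m), (u e = w ∨ v e = w) →
      (u e' = w ∨ v e' = w) → rk e w = rk e' w → e = e') :
    (∃ r : RFlow n m → Fin 3, congestion (rInp u v rk) rOut rDem r ≤ 1) ↔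
    (∃ c : Fin m → Fin 3, ∀ e e' : Fin m, e ≠ e' →
      (u e = u e' ∨ u e = v e' ∨ v e = u e' ∨ v e = v e') → c e ≠ c e') := by
  constructor
  · -- forward direction: routing with congestion ≤ 1 gives a proper 3-edge-coloring
    rintro ⟨r, hcong⟩
    have hconf_in : ∀ f g : RFlow n m, f ≠ g → rInp u v rk f = rInp u v rk g →
        r f = r g → rDem f + rDem g ≤ 1 :=
      fun f g => conflict_inp hcong rDem_nonneg
    have hconf_out : ∀ f g : RFlow n m, f ≠ g → rOut f = rOut g →
        r f = r g → rDem f + rDem g ≤ 1 :=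
      fun f g => conflict_out hcong rDem_nonneg
    have hrow : ∀ (k : Fin n) (x : Fin 3), r (.vert k x 0) ≠ r (.vert k x 1) := by
      intro k x heq
      have := hconf_in (.vert k x 0) (.vert k x 1) (by simp) rfl heq
      norm_num [rDem] at this
    have hcol : ∀ (k : Fin n) (jj : Fin 2) (x x' : Fin 3), x ≠ x' →
        r (.vert k x jj) ≠ r (.vert k x' jj) := by
      intro k jj x x' hxx' heq
      have := hconf_out (.vert k x jj) (.vert k x' jj) (by simp [hxx']) rfl heq
      norm_num [rDem] at this
    have hedg : ∀ e : Fin m, r (.edg e 0) ≠ r (.edg e 1) := by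
      intro e heq
      have := hconf_out (.edg e 0) (.edg e 1) (by simp) rfl heq
      norm_num [rDem] at this
    have hinc_edg : ∀ (e : Fin m) (b : Bool) (bb : Fin 2), r (.inc e b) ≠ r (.edg e bb) := by
      intro e b bb heq
      have := hconf_out (.inc e b) (.edg e bb) (by simp) rfl heq
      norm_num [rDem] at this
    have hincs : ∀ e : Fin m, r (.inc e false) = r (.inc e true) := fun e =>
      fin3_forced (r (.edg e 0)) (r (.edg e 1)) _ _ (hedg e)
        (hinc_edg e false 0) (hinc_edg e false 1) (hinc_edg e true 0) (hinc_edg e true 1)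
    have hvert_inc : ∀ (e : Fin m) (b : Bool) (jj : Fin 2),
        r (.vert (ept u v e b) (rk e (ept u v e b)) jj) ≠ r (.inc e b) := by
      intro e b jj heq
      have := hconf_in (.vert (ept u v e b) (rk e (ept u v e b)) jj) (.inc e b) (by simp) rfl heq
      norm_num [rDem] at this
    refine ⟨fun e => r (.inc e false), ?_⟩
    intro e e' hee hshare heq
    obtain ⟨b, b', hw⟩ : ∃ b b' : Bool, ept u v e b = ept u v e' b' := by
      rcases hshare with h | h | h | h
      exacts [⟨false, false, h⟩, ⟨false, true, h⟩, ⟨true, false, h⟩, ⟨true, true, h⟩]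
    have hIe : u e = ept u v e b ∨ v e = ept u v e b := ept_cases u v e b
    have hIe' : u e' = ept u v e b ∨ v e' = ept u v e b := by
      rw [hw]; exact ept_cases u v e' b'
    have hii : rk e (ept u v e b) ≠ rk e' (ept u v e b) :=
      fun h => hee (hrk (ept u v e b) e e' hIe hIe' h)
    have hmu : r (.inc e b) = r (.inc e false) := by
      cases b
      · rfl
      · exact (hincs e).symm
    have hmu' : r (.inc e' b') = r (.inc e false) := by
      cases b'
      · exact heq.symm
      · exact (hincs e').symm.trans heq.symm
    have havoid : ∀ jj : Fin 2,
        r (.vert (ept u v e b) (rk e (ept u v e b)) jj) ≠ r (.inc e false) := by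
      intro jj h
      exact hvert_inc e b jj (h.trans hmu.symm)
    have havoid' : ∀ jj : Fin 2,
        r (.vert (ept u v e b) (rk e' (ept u v e b)) jj) ≠ r (.inc e false) := by
      intro jj h
      rw [hw] at h
      exact hvert_inc e' b' jj (h.trans hmu'.symm)
    have hsurj : ∀ jj : Fin 2, ∃ x : Fin 3,
        r (.vert (ept u v e b) x jj) = r (.inc e false) := by
      intro jj
      have hinj : Function.Injective (fun x : Fin 3 => r (.vert (ept u v e b) x jj)) := by
        intro x x' hxy
        by_contra hne2
        exact hcol (ept u v e b) jj x x' hne2 hxy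
      exact Finite.injective_iff_surjective.mp hinj (r (.inc e false))
    obtain ⟨x0, hx0⟩ := hsurj 0
    obtain ⟨x1, hx1⟩ := hsurj 1
    have hx0a : x0 ≠ rk e (ept u v e b) := fun h => havoid 0 (by rw [← h]; exact hx0)
    have hx0b : x0 ≠ rk e' (ept u v e b) := fun h => havoid' 0 (by rw [← h]; exact hx0)
    have hx1a : x1 ≠ rk e (ept u v e b) := fun h => havoid 1 (by rw [← h]; exact hx1)
    have hx1b : x1 ≠ rk e' (ept u v e b) := fun h => havoid' 1 (by rw [← h]; exact hx1)
    have hx01 : x0 = x1 :=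
      fin3_third (rk e (ept u v e b)) (rk e' (ept u v e b)) x0 x1 hii hx0a hx0b hx1a hx1b
    have hx1' : r (.vert (ept u v e b) x0 1) = r (.inc e false) := by rw [hx01]; exact hx1
    exact hrow (ept u v e b) x0 (hx0.trans hx1'.symm)
  · -- backward direction: proper 3-edge-coloring gives a routing with congestion ≤ 1
    rintro ⟨c, hc⟩
    have hchoice : ∀ k : Fin n, ∃ σ : Fin 3 → Fin 3, (∀ a b, σ a = σ b → a = b) ∧
        ∀ (i : Fin 3) (e : Fin m), (u e = k ∨ v e = k) → rk e k = i → σ i = c e := by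
      intro k
      have hinjd : ∀ i j : Fin 3,
          decide (∃ e : Fin m, (u e = k ∨ v e = k) ∧ rk e k = i) = true →
          decide (∃ e : Fin m, (u e = k ∨ v e = k) ∧ rk e k = j) = true →
          (fun i : Fin 3 => if h : ∃ e : Fin m, (u e = k ∨ v e = k) ∧ rk e k = i
            then c h.choose else 0) i =
          (fun i : Fin 3 => if h : ∃ e : Fin m, (u e = k ∨ v e = k) ∧ rk e k = i
            then c h.choose else 0) j → i = j := by
        intro i j hpi hpj hdij
        have hPi : ∃ e : Fin m, (u e = k ∨ v e = k) ∧ rk e k = i := of_decide_eq_true hpi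
        have hPj : ∃ e : Fin m, (u e = k ∨ v e = k) ∧ rk e k = j := of_decide_eq_true hpj
        simp only [dif_pos hPi, dif_pos hPj] at hdij
        have hchi := hPi.choose_spec
        have hchj := hPj.choose_spec
        by_contra hij
        have hne' : hPi.choose ≠ hPj.choose := by
          intro h
          exact hij (by rw [← hchi.2, ← hchj.2, h])
        refine hc _ _ hne' ?_ hdij
        rcases hchi.1 with h1 | h1 <;> rcases hchj.1 with h2 | h2
        · exact Or.inl (h1.trans h2.symm)
        · exact Or.inr (Or.inl (h1.trans h2.symm))
        · exact Or.inr (Or.inr (Or.inl (h1.trans h2.symm)))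
        · exact Or.inr (Or.inr (Or.inr (h1.trans h2.symm)))
      obtain ⟨σ, hσinj, hσag⟩ := exists_inj_ext _ _ hinjd
      refine ⟨σ, hσinj, ?_⟩
      intro i e hie hrke
      have hPi : ∃ e : Fin m, (u e = k ∨ v e = k) ∧ rk e k = i := ⟨e, hie, hrke⟩
      have := hσag i (decide_eq_true hPi)
      rw [this]
      simp only [dif_pos hPi]
      have hch := hPi.choose_spec
      have heq : hPi.choose = e := hrk k _ _ hch.1 hie (hch.2.trans hrke.symm)
      rw [heq]
    choose σ hσinj hσag using hchoice
    refine ⟨routing σ c, ?_⟩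
    have hkey_in : ∀ f g : RFlow n m, rInp u v rk f = rInp u v rk g →
        routing σ c f = routing σ c g → f = g := by
      intro f g hio hrr
      rcases f with ⟨k, i, j⟩ | ⟨e, b⟩ | ⟨e, b⟩ <;> rcases g with ⟨k', i', j'⟩ | ⟨e', b'⟩ | ⟨e', b'⟩ <;>
        simp only [rInp, Fin.mk.injEq] at hio
      · -- vert vert
        have h1 := i.isLt; have h2 := i'.isLt
        have hk : k = k' := Fin.ext (by omega)
        have hi : i = i' := Fin.ext (by omega)
        subst hk; subst hi
        simp only [routing] at hrr
        rw [sh_inj _ _ _ hrr]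
      · -- vert edg
        exact absurd hio (by have := k.isLt; have := i.isLt; omega)
      · -- vert inc
        have h1 := i.isLt; have h2 := (rk e' (ept u v e' b')).isLt
        have hk : k = ept u v e' b' := Fin.ext (by omega)
        have hi : i = rk e' (ept u v e' b') := Fin.ext (by omega)
        subst hk; subst hi
        simp only [routing] at hrr
        rw [hσag _ _ e' (ept_cases u v e' b') rfl] at hrr
        exact absurd hrr (sh_ne _ _)
      · -- edg vert
        exact absurd hio (by have := k'.isLt; have := i'.isLt; omega)
      · -- edg edg
        have he : e = e' := Fin.ext (by omega)
        subst he
        simp only [routing] at hrr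
        rw [sh_inj _ _ _ hrr]
      · -- edg inc
        exact absurd hio
          (by have := (ept u v e' b').isLt; have := (rk e' (ept u v e' b')).isLt; omega)
      · -- inc vert
        have h1 := i'.isLt; have h2 := (rk e (ept u v e b)).isLt
        have hk : k' = ept u v e b := Fin.ext (by omega)
        have hi : i' = rk e (ept u v e b) := Fin.ext (by omega)
        subst hk; subst hi
        simp only [routing] at hrr
        rw [hσag _ _ e (ept_cases u v e b) rfl] at hrr
        exact absurd hrr.symm (sh_ne _ _)
      · -- inc edg
        exact absurd hio
          (by have := (ept u v e b).isLt; have := (rk e (ept u v e b)).isLt; omega)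
      · -- inc inc
        have h1 := (rk e (ept u v e b)).isLt
        have h2 := (rk e' (ept u v e' b')).isLt
        have hw : ept u v e b = ept u v e' b' := Fin.ext (by omega)
        rw [← hw] at hio
        have hIe' : u e' = ept u v e b ∨ v e' = ept u v e b := by
          rw [hw]; exact ept_cases u v e' b'
        have hrkeq : rk e (ept u v e b) = rk e' (ept u v e b) := Fin.ext (by omega)
        have hee : e = e' := hrk _ e e' (ept_cases u v e b) hIe' hrkeq
        subst hee
        have hbb : b = b' := by
          cases b <;> cases b' <;> simp [ept] at hw ⊢
          · exact absurd hw (hne e)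
          · exact absurd hw.symm (hne e)
        rw [hbb]
    have hkey_out : ∀ f g : RFlow n m, rOut f = rOut g →
        routing σ c f = routing σ c g → f ≠ g → ∃ e : Fin m,
        (f = .inc e false ∧ g = .inc e true) ∨ (f = .inc e true ∧ g = .inc e false) := by
      intro f g hio hrr hfg
      rcases f with ⟨k, i, j⟩ | ⟨e, b⟩ | ⟨e, b⟩ <;> rcases g with ⟨k', i', j'⟩ | ⟨e', b'⟩ | ⟨e', b'⟩ <;>
        simp only [rOut, Fin.mk.injEq] at hio
      · -- vert vert
        have h1 := j.isLt; have h2 := j'.isLt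
        have hk : k = k' := Fin.ext (by omega)
        have hj : j = j' := Fin.ext (by omega)
        subst hk; subst hj
        simp only [routing] at hrr
        have hi : i = i' := hσinj k _ _ (sh_cancel _ _ _ hrr)
        exact absurd (by rw [hi]) hfg
      · exact absurd hio (by have := k.isLt; have := j.isLt; omega)
      · exact absurd hio (by have := k.isLt; have := j.isLt; omega)
      · exact absurd hio (by have := k'.isLt; have := j'.isLt; omega)
      · -- edg edg
        have he : e = e' := Fin.ext (by omega)
        subst he
        simp only [routing] at hrr
        exact absurd (by rw [sh_inj _ _ _ hrr]) hfg
      · -- edg inc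
        have he : e = e' := Fin.ext (by omega)
        subst he
        simp only [routing] at hrr
        exact absurd hrr (sh_ne _ _)
      · exact absurd hio (by have := k'.isLt; have := j'.isLt; omega)
      · -- inc edg
        have he : e = e' := Fin.ext (by omega)
        subst he
        simp only [routing] at hrr
        exact absurd hrr.symm (sh_ne _ _)
      · -- inc inc
        have he : e = e' := Fin.ext (by omega)
        subst he
        cases b <;> cases b'
        · exact absurd rfl hfg
        · exact ⟨e, Or.inl ⟨rfl, rfl⟩⟩
        · exact ⟨e, Or.inr ⟨rfl, rfl⟩⟩
        · exact absurd rfl hfg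
    unfold congestion
    refine Real.iSup_le (fun p => ?_) zero_le_one
    refine max_le ?_ ?_
    · -- input side
      refine sum_single_le _ _ (fun f _ => rDem_le_one f) ?_
      intro f hf g hg
      simp only [Finset.mem_filter, Finset.mem_univ, true_and] at hf hg
      exact hkey_in f g (hf.1.trans hg.1.symm) (hf.2.trans hg.2.symm)
    · -- output side
      refine sum_pairing_le _ _ (fun f _ => rDem_le_one f) ?_
      intro f hf g hg hfg
      simp only [Finset.mem_filter, Finset.mem_univ, true_and] at hf hg
      obtain ⟨e, hcase⟩ := hkey_out f g (hf.1.trans hg.1.symm) (hf.2.trans hg.2.symm) hfg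
      constructor
      · rcases hcase with ⟨hf1, hg1⟩ | ⟨hf1, hg1⟩ <;> rw [hf1, hg1] <;> norm_num [rDem]
      · intro x hx
        simp only [Finset.mem_filter, Finset.mem_univ, true_and] at hx
        by_cases hxf : x = f
        · exact Or.inl hxf
        obtain ⟨e2, hcase2⟩ := hkey_out x f (hx.1.trans hf.1.symm) (hx.2.trans hf.2.symm) hxf
        rcases hcase with ⟨hf1, hg1⟩ | ⟨hf1, hg1⟩ <;>
          rcases hcase2 with ⟨hx2, hf2⟩ | ⟨hx2, hf2⟩ <;> rw [hf1] at hf2 <;>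
          simp only [RFlow.inc.injEq] at hf2
        · exact absurd hf2.2 (by simp)
        · right; rw [hx2, hg1, hf2.1]
        · right; rw [hx2, hg1, hf2.1]
        · exact absurd hf2.2 (by simp)
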